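/- If G is a graph of order n ≥ 11 with λ_3(G) = ℓ where 1 ≤ ℓ ≤ n − 4, then G has at least ⌈ℓ(ℓ+1)n/(2ℓ+1)⌉ edges. -/

import Mathlib

open SimpleGraph

/-- An `S`-Steiner tree in `G`: a subgraph of `G` that is a tree whose
vertex set contains `S`. -/
def SimpleGraph.IsSteinerTree {V : Type*} (G : SimpleGraph V) (S : Set V)
    (T : G.Subgraph) : Prop :=
  S ⊆ T.verts ∧ T.coe.IsTree

/-- The generalized local edge-connectivity `λ(S)`: the maximum number of
pairwise edge-disjoint `S`-Steiner trees in `G`. -/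
noncomputable def SimpleGraph.steinerLambda {V : Type*} (G : SimpleGraph V)
    (S : Set V) : ℕ :=
  sSup {n | ∃ T : Fin n → G.Subgraph, (∀ i, G.IsSteinerTree S (T i)) ∧
    ∀ i j, i ≠ j → Disjoint (T i).edgeSet (T j).edgeSet}

/-- The generalized `k`-edge-connectivity `λ_k(G)`:
the minimum of `λ(S)` over all `k`-element vertex subsets `S`. -/
noncomputable def SimpleGraph.genEdgeConn {V : Type*} (G : SimpleGraph V)
    (k : ℕ) : ℕ :=
  sInf {m | ∃ S : Set V, S.ncard = k ∧ G.steinerLambda S = m}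

/-!
Write `ℓ = λ₃(G)` and `m = |E(G)|`. Every vertex `u` lies in some 3-set `S`, and each of the `ℓ`
edge-disjoint `S`-Steiner trees has an edge at `u`, so `δ(G) ≥ ℓ`. If two adjacent vertices `u, v`
both have degree `ℓ`, then with `S = {u, v, w}` each tree has exactly one edge at `u` and one at `v`;
the tree containing `uv` is then just this edge and misses `w`. Hence the vertices of degree `ℓ`
form an independent set `D`, so `ℓ|D| ≤ m`, while the degree sum gives `(ℓ + 1)n - |D| ≤ 2m`.
Adding `ℓ` times the second inequality to the first gives `ℓ(ℓ + 1)n ≤ (2ℓ + 1)m`.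
-/

open Finset

namespace SimpleGraph

variable {V : Type*} {G : SimpleGraph V}

def IsSteinerTreePacking {ℓ : ℕ} (S : Set V) (T : Fin ℓ → G.Subgraph) : Prop :=
  (∀ i, G.IsSteinerTree S (T i)) ∧ ∀ i j, i ≠ j → Disjoint (T i).edgeSet (T j).edgeSet

theorem exists_isSteinerTreePacking_of_le_steinerLambda {S : Set V} {ℓ : ℕ}
    (h : ℓ ≤ G.steinerLambda S) : ∃ T : Fin ℓ → G.Subgraph, G.IsSteinerTreePacking S T := by
  set A := {n | ∃ T : Fin n → G.Subgraph, G.IsSteinerTreePacking S T}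
  have hdown : ∀ {m n : ℕ}, m ≤ n → n ∈ A → m ∈ A := by
    rintro m n hmn ⟨T, hT, hdisj⟩
    exact ⟨fun i => T (Fin.castLE hmn i), fun i => hT _,
      fun i j hij => hdisj _ _ fun e => hij (Fin.castLE_injective hmn e)⟩
  by_contra hℓ
  have hlt : ∀ n ∈ A, n < ℓ := fun n hn => lt_of_not_ge fun hle => hℓ (hdown hle hn)
  have hA : A.Nonempty := ⟨0, Fin.elim0, fun i => i.elim0, fun i => i.elim0⟩
  have hsup := hlt _ (Nat.sSup_mem hA ⟨ℓ, fun n hn => (hlt n hn).le⟩)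
  exact absurd h (not_le.mpr hsup)

theorem genEdgeConn_le_steinerLambda {S : Set V} {k : ℕ} (hS : S.ncard = k) :
    G.genEdgeConn k ≤ G.steinerLambda S :=
  Nat.sInf_le ⟨S, hS, rfl⟩

namespace Subgraph

theorem exists_adj_of_preconnected {H : G.Subgraph} (hH : H.coe.Preconnected) {u a : V}
    (hu : u ∈ H.verts) (ha : a ∈ H.verts) (hua : u ≠ a) : ∃ x, H.Adj u x := by
  obtain ⟨x, hx⟩ := (hH ⟨u, hu⟩ ⟨a, ha⟩).nonempty_neighborSet_left (by simpa using hua)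
  exact ⟨x, hx⟩

theorem verts_subset_pair_of_preconnected {H : G.Subgraph} (hH : H.coe.Preconnected) {u v : V}
    (hu : u ∈ H.verts) (hu' : ∀ x, H.Adj u x → x = v)
    (hv' : ∀ x, H.Adj v x → x = u) : H.verts ⊆ {u, v} := by
  intro w hw
  by_contra hw'
  obtain ⟨p⟩ := hH ⟨u, hu⟩ ⟨w, hw⟩
  obtain ⟨d, -, hd, hd'⟩ := p.exists_boundary_dart {x | x.1 ∈ ({u, v} : Set V)} (by simp) hw'
  have hadj : H.Adj d.fst d.snd := d.adj
  rcases hd with hd | hd <;> rw [hd] at hadj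
  · exact hd' (Or.inr (hu' _ hadj))
  · exact hd' (Or.inl (hv' _ hadj))

end Subgraph

namespace IsSteinerTreePacking

variable {S : Set V} {ℓ : ℕ} {T : Fin ℓ → G.Subgraph}

theorem eq_of_adj_of_adj (hT : G.IsSteinerTreePacking S T) {i j : Fin ℓ} {u x : V}
    (hi : (T i).Adj u x) (hj : (T j).Adj u x) : i = j := by
  by_contra hij
  exact Set.disjoint_left.mp (hT.2 i j hij) (Subgraph.mem_edgeSet.mpr hi)
    (Subgraph.mem_edgeSet.mpr hj)

theorem exists_adj (hT : G.IsSteinerTreePacking S T) {u a : V} (hu : u ∈ S) (ha : a ∈ S)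
    (hua : u ≠ a) (i : Fin ℓ) : ∃ x, (T i).Adj u x :=
  Subgraph.exists_adj_of_preconnected (hT.1 i).2.connected.preconnected
    ((hT.1 i).1 hu) ((hT.1 i).1 ha) hua

theorem exists_injective_neighbor (hT : G.IsSteinerTreePacking S T) {u a : V} (hu : u ∈ S)
    (ha : a ∈ S) (hua : u ≠ a) :
    ∃ f : Fin ℓ → G.neighborSet u, f.Injective ∧ ∀ i, (T i).Adj u (f i) := by
  choose f hf using hT.exists_adj hu ha hua
  refine ⟨fun i => ⟨f i, (hf i).adj_sub⟩, fun i j hij => ?_, hf⟩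
  have hfij : f i = f j := congrArg Subtype.val hij
  exact hT.eq_of_adj_of_adj (hf i) (hfij ▸ hf j)

theorem le_degree (hT : G.IsSteinerTreePacking S T) {u a : V} [Fintype (G.neighborSet u)]
    (hu : u ∈ S) (ha : a ∈ S) (hua : u ≠ a) : ℓ ≤ G.degree u := by
  obtain ⟨f, hf, -⟩ := hT.exists_injective_neighbor hu ha hua
  have := Fintype.card_le_of_injective f hf
  rwa [Fintype.card_fin, card_neighborSet_eq_degree] at this

theorem exists_forall_adj_iff (hT : G.IsSteinerTreePacking S T) {u a x : V}
    [Fintype (G.neighborSet u)] (hu : u ∈ S) (ha : a ∈ S) (hua : u ≠ a)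
    (hdeg : G.degree u = ℓ) (hux : G.Adj u x) : ∃ i, ∀ y, (T i).Adj u y ↔ y = x := by
  obtain ⟨f, hf, hfT⟩ := hT.exists_injective_neighbor hu ha hua
  have hsurj : f.Surjective := ((Fintype.bijective_iff_injective_and_card f).mpr
    ⟨hf, by rw [Fintype.card_fin, card_neighborSet_eq_degree, hdeg]⟩).2
  have hval : ∀ y (hy : G.Adj u y), ∃ i, (f i : V) = y := fun y hy =>
    (hsurj ⟨y, hy⟩).imp fun _ h => congrArg Subtype.val h
  obtain ⟨i, rfl⟩ := hval x hux
  refine ⟨i, fun y => ⟨fun hy => ?_, fun hy => hy ▸ hfT i⟩⟩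
  obtain ⟨j, rfl⟩ := hval y hy.adj_sub
  rw [hT.eq_of_adj_of_adj hy (hfT j)]

theorem not_adj_of_degree_eq (hT : G.IsSteinerTreePacking S T) {u v w : V}
    [Fintype (G.neighborSet u)] [Fintype (G.neighborSet v)] (hu : u ∈ S) (hv : v ∈ S)
    (hw : w ∈ S) (hwu : w ≠ u) (hwv : w ≠ v) (hdu : G.degree u = ℓ) (hdv : G.degree v = ℓ) :
    ¬ G.Adj u v := by
  intro huv
  obtain ⟨i, hi⟩ := hT.exists_forall_adj_iff hu hw hwu.symm hdu huv
  obtain ⟨j, hj⟩ := hT.exists_forall_adj_iff hv hw hwv.symm hdv huv.symm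
  have hij : i = j := hT.eq_of_adj_of_adj ((hi v).mpr rfl) ((hj u).mpr rfl).symm
  subst hij
  -- in the tree `T i` the edge `uv` would be a whole component, missing `w`
  have hsub : (T i).verts ⊆ {u, v} :=
    Subgraph.verts_subset_pair_of_preconnected (hT.1 i).2.connected.preconnected
      ((hT.1 i).1 hu) (fun x => (hi x).mp) (fun x => (hj x).mp)
  rcases hsub ((hT.1 i).1 hw) with h | h
  exacts [hwu h, hwv h]

end IsSteinerTreePacking

section Finite

variable [Fintype V]

theorem exists_isSteinerTreePacking_genEdgeConn_three (hV : 3 ≤ Fintype.card V) {u v : V}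
    (huv : u ≠ v) : ∃ w, w ≠ u ∧ w ≠ v ∧
      ∃ T : Fin (G.genEdgeConn 3) → G.Subgraph, G.IsSteinerTreePacking {u, v, w} T := by
  obtain ⟨w, hwu, hwv⟩ :=
    ENat.exists_ne_ne_of_three_le (by simpa [ENat.card_eq_coe_fintype_card] using hV) u v
  have hS : ({u, v, w} : Set V).ncard = 3 :=
    Set.ncard_eq_three.mpr ⟨u, v, w, huv, hwu.symm, hwv.symm, rfl⟩
  exact ⟨w, hwu, hwv, exists_isSteinerTreePacking_of_le_steinerLambda
    (genEdgeConn_le_steinerLambda hS)⟩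

theorem genEdgeConn_three_le_degree (hV : 3 ≤ Fintype.card V) (v : V)
    [Fintype (G.neighborSet v)] : G.genEdgeConn 3 ≤ G.degree v := by
  obtain ⟨a, hav⟩ := Fintype.exists_ne_of_one_lt_card (by omega) v
  obtain ⟨w, -, -, T, hT⟩ := G.exists_isSteinerTreePacking_genEdgeConn_three hV hav.symm
  exact hT.le_degree (by simp) (by simp) hav.symm

theorem isIndepSet_degree_eq_genEdgeConn_three [DecidableRel G.Adj] (hV : 3 ≤ Fintype.card V) :
    G.IsIndepSet {v | G.degree v = G.genEdgeConn 3} := by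
  intro u hu v hv huv
  obtain ⟨w, hwu, hwv, T, hT⟩ := G.exists_isSteinerTreePacking_genEdgeConn_three hV huv
  exact hT.not_adj_of_degree_eq (by simp) (by simp) (by simp) hwu hwv hu hv

variable [DecidableRel G.Adj]

theorem sum_degree_le_card_edgeFinset_of_isIndepSet {D : Finset V} (hD : G.IsIndepSet D) :
    ∑ v ∈ D, G.degree v ≤ #G.edgeFinset := by
  classical
  have hdisj : (D : Set V).PairwiseDisjoint fun v => G.incidenceFinset v := by
    intro u hu v hv huv
    refine Finset.disjoint_left.mpr fun e heu hev => hD hu hv huv ?_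
    exact G.adj_of_mem_incidenceSet huv ((G.mem_incidenceFinset u e).mp heu)
      ((G.mem_incidenceFinset v e).mp hev)
  calc ∑ v ∈ D, G.degree v = #(D.biUnion fun v => G.incidenceFinset v) := by
        simp [card_biUnion hdisj, card_incidenceFinset_eq_degree]
    _ ≤ #G.edgeFinset := card_le_card (biUnion_subset.mpr fun v _ => G.incidenceFinset_subset v)

theorem succ_mul_card_le_of_forall_le_degree (ℓ : ℕ) (hδ : ∀ v, ℓ ≤ G.degree v) :
    (ℓ + 1) * Fintype.card V ≤ 2 * #G.edgeFinset + #{v | G.degree v = ℓ} := by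
  rw [← sum_degrees_eq_twice_card_edges, card_filter, ← sum_add_distrib, ← card_univ,
    mul_comm, ← smul_eq_mul, ← sum_const]
  refine sum_le_sum fun v _ => ?_
  have := hδ v
  split_ifs <;> omega

theorem mul_succ_mul_card_le_of_isIndepSet (ℓ : ℕ) (hδ : ∀ v, ℓ ≤ G.degree v)
    (hind : G.IsIndepSet {v | G.degree v = ℓ}) :
    ℓ * (ℓ + 1) * Fintype.card V ≤ (2 * ℓ + 1) * #G.edgeFinset := by
  have hD : ℓ * #{v | G.degree v = ℓ} ≤ #G.edgeFinset := by
    have := G.sum_degree_le_card_edgeFinset_of_isIndepSet (D := {v | G.degree v = ℓ})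
      (by simpa using hind)
    rwa [sum_congr rfl fun v hv => (mem_filter.mp hv).2, sum_const, smul_eq_mul, mul_comm] at this
  have hsum := Nat.mul_le_mul_left ℓ (G.succ_mul_card_le_of_forall_le_degree ℓ hδ)
  linarith

end Finite

end SimpleGraph

theorem edge_lower_bound_of_lambda_three_general {V : Type*} [Fintype V]
    (G : SimpleGraph V) (n ℓ : ℕ) (hn : Fintype.card V = n) (h11 : 11 ≤ n)
    (h : G.genEdgeConn 3 = ℓ) :
    (ℓ * (ℓ + 1) * n + 2 * ℓ) / (2 * ℓ + 1) ≤ G.edgeSet.ncard := by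
  classical
  subst hn h
  have hV : 3 ≤ Fintype.card V := by omega
  have hcount := G.mul_succ_mul_card_le_of_isIndepSet _
    (fun v => G.genEdgeConn_three_le_degree hV v)
    (G.isIndepSet_degree_eq_genEdgeConn_three hV)
  rw [← coe_edgeFinset, Set.ncard_coe_finset, Nat.div_le_iff_le_mul_add_pred (by omega),
    Nat.add_sub_cancel]
  omega

theorem edge_lower_bound_of_lambda_three {V : Type*} [Fintype V]
    (G : SimpleGraph V) (n ℓ : ℕ) (hn : Fintype.card V = n) (h11 : 11 ≤ n)
    (hl1 : 1 ≤ ℓ) (hl2 : ℓ ≤ n - 4) (h : G.genEdgeConn 3 = ℓ) :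
    (ℓ * (ℓ + 1) * n + 2 * ℓ) / (2 * ℓ + 1) ≤ G.edgeSet.ncard :=
  edge_lower_bound_of_lambda_three_general G n ℓ hn h11 h
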